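/- arXiv:1103.5916 — 3 statements merged into one kernel-verified Lean document; each statement's English description precedes it below -/
import Mathlib

section
/- Let N be a net, σ and ρ firing sequences of N, and suppose there exists a finite GR-process P of N with P ∈ Π(σ) ∩ Π(ρ), i.e. σ ∈ Lin(P) and ρ ∈ Lin(P). Then σ ↔* ρ. -/
open scoped Classical

noncomputable section

/-- A place/transition net: `pre t s` and `post t s` are the arc weights
`F(s,t)` and `F(t,s)` of the flow relation, and `M0` is the initial marking.
Every transition has a finite non-empty set of preplaces and a finite set of
postplaces. -/
structure Net (S : Type*) (T : Type*) where
  pre : T → S → ℕ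
  post : T → S → ℕ
  M0 : S → ℕ
  pre_fin : ∀ t, {s | pre t s ≠ 0}.Finite
  pre_ne : ∀ t, ∃ s, pre t s ≠ 0
  post_fin : ∀ t, {s | post t s ≠ 0}.Finite

namespace Net

variable {S T : Type*}

/-- `•G`: the multiset of preplaces of a finite multiset `G` of transitions,
as a function `S → ℕ`. -/
def preM (N : Net S T) (G : Multiset T) (s : S) : ℕ :=
  (G.map fun t => N.pre t s).sum

/-- `G•`: the multiset of postplaces of a finite multiset `G` of transitions. -/
def postM (N : Net S T) (G : Multiset T) (s : S) : ℕ :=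
  (G.map fun t => N.post t s).sum

/-- The (non-empty, finite) multiset `G` of transitions is enabled in marking `M`. -/
def Enabled (N : Net S T) (M : S → ℕ) (G : Multiset T) : Prop :=
  G ≠ 0 ∧ ∀ s, N.preM G s ≤ M s

/-- `G` is a step from `M` to `M'`. -/
def Step (N : Net S T) (M : S → ℕ) (G : Multiset T) (M' : S → ℕ) : Prop :=
  N.Enabled M G ∧ ∀ s, M' s = M s - N.preM G s + N.postM G s

/-- `M →σ M'`: sequential firing of the word `σ` of transitions. -/
def FireSeq (N : Net S T) : (S → ℕ) → List T → (S → ℕ) → Prop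
  | M, [], M' => M' = M
  | M, t :: σ, M' => ∃ M₁, N.Step M {t} M₁ ∧ N.FireSeq M₁ σ M'

/-- `σ` is a firing sequence of `N`. -/
def FS (N : Net S T) (σ : List T) : Prop := ∃ M', N.FireSeq N.M0 σ M'

/-- `M` is reachable from the initial marking. -/
def Reachable (N : Net S T) (M : S → ℕ) : Prop := ∃ σ, N.FireSeq N.M0 σ M

/-- Two firing sequences are adjacent iff they differ only in the exchange of
two neighbouring transitions that could have been fired in one step. -/
def Adjacent (N : Net S T) (σ ρ : List T) : Prop :=
  N.FS σ ∧ N.FS ρ ∧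
    ∃ (σ₁ : List T) (t u : T) (σ₂ : List T) (M : S → ℕ),
      σ = σ₁ ++ t :: u :: σ₂ ∧ ρ = σ₁ ++ u :: t :: σ₂ ∧
      N.FireSeq N.M0 σ₁ M ∧ N.Enabled M (t ::ₘ {u})

/-- `↔*`: the reflexive transitive closure of adjacency. -/
def AdjEquiv (N : Net S T) : List T → List T → Prop :=
  Relation.ReflTransGen N.Adjacent

/-- A structural conflict net: transitions that can occur together in a step
never share a preplace. -/
def StructuralConflictNet (N : Net S T) : Prop :=
  ∀ t u : T, (∃ M, N.Reachable M ∧ N.Enabled M (t ::ₘ {u})) →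
    ∀ s, N.pre t s = 0 ∨ N.pre u s = 0

/-- The finite non-empty multiset `G` of transitions is in (semantic) conflict
in the marking `M`: every `G↾{t}` is enabled but `G` itself is not. -/
def InConflict (N : Net S T) (M : S → ℕ) (G : Multiset T) : Prop :=
  G ≠ 0 ∧ (∀ t ∈ G, N.Enabled M (Multiset.replicate (G.count t) t)) ∧
    ¬ N.Enabled M G

/-- `N` is (semantic) conflict-free. -/
def ConflictFree (N : Net S T) : Prop :=
  ∀ M, N.Reachable M → ∀ G : Multiset T, ¬ N.InConflict M G

end Net

/-- The type of firing sequences of `N`. -/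
def FSeq {S T : Type*} (N : Net S T) := {σ : List T // N.FS σ}

/-- Partial FS-runs: `↔*`-equivalence classes of firing sequences. -/
def PartialFSRun {S T : Type*} (N : Net S T) :=
  Quot (fun σ ρ : FSeq N => N.AdjEquiv σ.1 ρ.1)

/-- `[σ]`, the `↔*`-equivalence class of a firing sequence. -/
def fsClass {S T : Type*} (N : Net S T) (σ : FSeq N) : PartialFSRun N :=
  Quot.mk _ σ

/-- The prefix order on partial FS-runs: `[σ] ≤ [ρ]` iff
`∃ μ, σ ≤ μ ↔* ρ`. -/
def fsRunLE {S T : Type*} (N : Net S T) (x y : PartialFSRun N) : Prop :=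
  ∃ σ ρ : FSeq N, fsClass N σ = x ∧ fsClass N ρ = y ∧
    ∃ μ : List T, σ.1 <+: μ ∧ N.AdjEquiv μ ρ.1

/-- An FS-run: a prefix-closed and directed set of partial FS-runs. -/
def IsFSRun {S T : Type*} (N : Net S T) (R : Set (PartialFSRun N)) : Prop :=
  (∀ x y, fsRunLE N x y → y ∈ R → x ∈ R) ∧
  (∀ x ∈ R, ∀ y ∈ R, ∃ z ∈ R, fsRunLE N x z ∧ fsRunLE N y z)

/-- An FS-run `R` is conflict-free iff whenever, for every `t` in a finite
non-empty multiset `G`, the class of `σ t^{G(t)}` belongs to `R` and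
`M₀ →σ →(G↾{t})`, then `M₀ →σ →G`. -/
def ConflictFreeFSRun {S T : Type*} (N : Net S T)
    (R : Set (PartialFSRun N)) : Prop :=
  ∀ (G : Multiset T) (σ : List T), G ≠ 0 →
    (∀ t ∈ G,
      (∃ h : N.FS (σ ++ List.replicate (G.count t) t),
        fsClass N ⟨σ ++ List.replicate (G.count t) t, h⟩ ∈ R) ∧
      ∃ M, N.FireSeq N.M0 σ M ∧
        N.Enabled M (Multiset.replicate (G.count t) t)) →
    ∃ M, N.FireSeq N.M0 σ M ∧ N.Enabled M G

/-- The raw data of a candidate (GR-)process of a net with places `S` and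
transitions `T`: an occurrence net whose places are drawn from `α` and whose
transitions are drawn from `β`, together with the projections to `S` and `T`. -/
structure RawProc (S T α β : Type*) where
  places : Set α
  transitions : Set β
  flowPT : α → β → ℕ
  flowTP : β → α → ℕ
  initMark : α → ℕ
  projS : α → S
  projT : β → T

namespace RawProc

variable {S T α β : Type*}

/-- The flow relation of the occurrence net, as a relation on `α ⊕ β`. -/
def flowRel (P : RawProc S T α β) : (α ⊕ β) → (α ⊕ β) → Prop := fun x y =>
  match x, y with
  | Sum.inl p, Sum.inr t => P.flowPT p t ≠ 0
  | Sum.inr t, Sum.inl p => P.flowTP t p ≠ 0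
  | _, _ => False

/-- `F⁺`, the transitive closure of the flow relation. -/
def causal (P : RawProc S T α β) : (α ⊕ β) → (α ⊕ β) → Prop :=
  Relation.TransGen P.flowRel

/-- `P` is finite iff its set of transitions is finite. -/
def FiniteProc (P : RawProc S T α β) : Prop := P.transitions.Finite

/-- `Q` is a prefix of `P` (written `Q ≤ P`): the places and transitions of `Q`
are included in those of `P`, the initial markings coincide, and flow relation
and projection of `Q` are the restrictions of those of `P`. -/
def IsPrefix (Q P : RawProc S T α β) : Prop :=
  Q.places ⊆ P.places ∧ Q.transitions ⊆ P.transitions ∧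
  Q.initMark = P.initMark ∧
  (∀ p ∈ Q.places, ∀ t ∈ Q.transitions,
    Q.flowPT p t = P.flowPT p t ∧ Q.flowTP t p = P.flowTP t p) ∧
  (∀ p ∈ Q.places, Q.projS p = P.projS p) ∧
  (∀ t ∈ Q.transitions, Q.projT t = P.projT t)

/-- Isomorphism of processes of the same net: a bijection between places and
between transitions preserving flow, initial marking and the projections. -/
def Iso (P Q : RawProc S T α β) : Prop :=
  ∃ (fS : α → α) (fT : β → β),
    Set.BijOn fS P.places Q.places ∧ Set.BijOn fT P.transitions Q.transitions ∧
    (∀ p ∈ P.places, ∀ t ∈ P.transitions,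
      Q.flowPT (fS p) (fT t) = P.flowPT p t ∧
      Q.flowTP (fT t) (fS p) = P.flowTP t p) ∧
    (∀ p ∈ P.places, Q.initMark (fS p) = P.initMark p) ∧
    (∀ p ∈ P.places, Q.projS (fS p) = P.projS p) ∧
    (∀ t ∈ P.transitions, Q.projT (fT t) = P.projT t)

/-- `swap(P,p,q)`: exchange the outgoing arcs of the places `p` and `q`. -/
def swap (P : RawProc S T α β) (p q : α) : RawProc S T α β :=
  { P with flowPT := fun x t =>
      if x = p then P.flowPT q t
      else if x = q then P.flowPT p t
      else P.flowPT x t }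

/-- One step swapping equivalence `P ≈s Q`: `swap(P,p,q)` is isomorphic to `Q`
for some causally unrelated places `p`, `q` with the same image in the net. -/
def SwapStep (P Q : RawProc S T α β) : Prop :=
  ∃ p q : α, p ∈ P.places ∧ q ∈ P.places ∧ P.projS p = P.projS q ∧
    ¬ P.causal (Sum.inl p) (Sum.inl q) ∧ ¬ P.causal (Sum.inl q) (Sum.inl p) ∧
    Iso (P.swap p q) Q

/-- `≈s*`: the reflexive transitive closure of one step swapping equivalence. -/
def SwapEquiv : RawProc S T α β → RawProc S T α β → Prop :=
  Relation.ReflTransGen SwapStep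

/-- `Lin(P)`: the linearisations of a finite process `P`, i.e. the images under
the projection of the enumerations of its transitions compatible with `F*`. -/
def Lin (P : RawProc S T α β) : Set (List T) :=
  { σ | ∃ ts : List β, ts.Nodup ∧ (∀ t : β, t ∈ ts ↔ t ∈ P.transitions) ∧
      (∀ (i j : ℕ) (hi : i < ts.length) (hj : j < ts.length),
        Relation.ReflTransGen P.flowRel
          (Sum.inr (ts.get ⟨i, hi⟩)) (Sum.inr (ts.get ⟨j, hj⟩)) → i ≤ j) ∧
      σ = ts.map P.projT }

end RawProc

/-- `P` is a (GR-)process of the net `N`: its underlying net is an occurrence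
net (unbranched places, acyclic flow, finite causal pasts, transitions with
finite non-empty presets and finite postsets), the flow, initial marking and
projections are normalised to vanish outside the places/transitions, and the
projection maps the process onto `N` respecting initial marking and arc
weights (counted via the preimages of the projection). -/
structure IsProcessOf {S T α β : Type*} (N : Net S T)
    (P : RawProc S T α β) : Prop where
  flowPT_dom : ∀ p t, P.flowPT p t ≠ 0 → p ∈ P.places ∧ t ∈ P.transitions
  flowTP_dom : ∀ t p, P.flowTP t p ≠ 0 → p ∈ P.places ∧ t ∈ P.transitions
  initMark_dom : ∀ p, p ∉ P.places → P.initMark p = 0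
  pre_place : ∀ p ∈ P.places,
    {t | P.flowTP t p ≠ 0}.Subsingleton ∧ ∀ t, P.flowTP t p ≤ 1
  post_place : ∀ p ∈ P.places,
    {t | P.flowPT p t ≠ 0}.Subsingleton ∧ ∀ t, P.flowPT p t ≤ 1
  init_one : ∀ p ∈ P.places, (∀ t, P.flowTP t p = 0) → P.initMark p = 1
  init_zero : ∀ p ∈ P.places, (∃ t, P.flowTP t p ≠ 0) → P.initMark p = 0
  acyclic : ∀ x, ¬ P.causal x x
  finite_past : ∀ t ∈ P.transitions,
    {u : β | P.causal (Sum.inr u) (Sum.inr t)}.Finite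
  t_pre_fin : ∀ t ∈ P.transitions, {p | P.flowPT p t ≠ 0}.Finite
  t_pre_ne : ∀ t ∈ P.transitions, ∃ p, P.flowPT p t ≠ 0
  t_post_fin : ∀ t ∈ P.transitions, {p | P.flowTP t p ≠ 0}.Finite
  proj_init_fin : ∀ s : S, {p | P.projS p = s ∧ P.initMark p ≠ 0}.Finite
  proj_init : ∀ s : S, (∑ᶠ p ∈ {p | P.projS p = s}, P.initMark p) = N.M0 s
  proj_pre : ∀ t ∈ P.transitions, ∀ s : S,
    (∑ᶠ p ∈ {p | P.projS p = s}, P.flowPT p t) = N.pre (P.projT t) s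
  proj_post : ∀ t ∈ P.transitions, ∀ s : S,
    (∑ᶠ p ∈ {p | P.projS p = s}, P.flowTP t p) = N.post (P.projT t) s

/-- The type of finite GR-processes of `N` with places in `α` and transitions
in `β`. -/
def FinProcOf {S T : Type*} (N : Net S T) (α β : Type*) :=
  {P : RawProc S T α β // IsProcessOf N P ∧ P.FiniteProc}

/-- Partial BD-runs: `≈s*`-equivalence classes of finite GR-processes. -/
def PartialBDRun {S T : Type*} (N : Net S T) (α β : Type*) :=
  Quot (fun P Q : FinProcOf N α β => RawProc.SwapEquiv P.1 Q.1)

/-- `⟦P⟧`, the `≈s*`-equivalence class of a finite process. -/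
def bdClass {S T α β : Type*} (N : Net S T) (P : FinProcOf N α β) :
    PartialBDRun N α β :=
  Quot.mk _ P

/-- The lifted prefix relation on `≈s*`-equivalence classes:
`⟦P⟧ ≤ ⟦Q⟧` iff `P ≈s* P' ≤ Q' ≈s* Q` for some `P'`, `Q'`. -/
def bdRunLE {S T α β : Type*} (N : Net S T)
    (x y : PartialBDRun N α β) : Prop :=
  ∃ P Q : FinProcOf N α β, bdClass N P = x ∧ bdClass N Q = y ∧
    ∃ P' Q' : RawProc S T α β,
      RawProc.SwapEquiv P.1 P' ∧ RawProc.IsPrefix P' Q' ∧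
      RawProc.SwapEquiv Q' Q.1

/-- A BD-run: a prefix-closed and directed set of partial BD-runs. -/
def IsBDRun {S T α β : Type*} (N : Net S T)
    (R : Set (PartialBDRun N α β)) : Prop :=
  (∀ x y, bdRunLE N x y → y ∈ R → x ∈ R) ∧
  (∀ x ∈ R, ∀ y ∈ R, ∃ z ∈ R, bdRunLE N x z ∧ bdRunLE N y z)

/-- `⌊P⌋ = ↓{⟦P'⟧ | P' ≤ P, P' finite}`: the prefix-closure of the set of
classes of finite prefixes of the process `P`. -/
def BDify {S T α β : Type*} (N : Net S T) (P : RawProc S T α β) :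
    Set (PartialBDRun N α β) :=
  { x | ∃ Q : FinProcOf N α β, RawProc.IsPrefix Q.1 P ∧ bdRunLE N x (bdClass N Q) }

/-- Swapping equivalence `P ≈s∞ Q` of (possibly infinite) processes:
`↓{⟦P'⟧ | P' ≤ P, P' finite} = ↓{⟦Q'⟧ | Q' ≤ Q, Q' finite}`. -/
def SwapEquivInf {S T α β : Type*} (N : Net S T)
    (P Q : RawProc S T α β) : Prop :=
  BDify N P = BDify N Q

/-- A canonical carrier type, large enough to host every GR-process of a net
with places `S` and transitions `T`. -/
abbrev BigCarrier (S T : Type*) := Set ((S ⊕ T) × ℕ)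

end

/-!
Fix enumerations `ts` and `us` of the transitions of `P` whose images are `σ` and `ρ`. Both
respect causality, so `ts` can be bubble-sorted into `us` by exchanging neighbours `x y` with `x`
not a cause of `y`, and every intermediate list still respects causality. Firing a causality
respecting enumeration in `N` visits the markings obtained by projecting the tokens of `P` left
after each prefix. Two neighbours that may be exchanged are both ready after the common prefix
and, since places of `P` are unbranched, consume from disjoint places; so they are enabled as a
step, i.e. each exchange is an adjacency `↔` of the images.
-/

open Relation Function

section FinsumMem

variable {α ι M : Type*} [AddCommMonoid M] {s : Set α}

theorem finsum_mem_le_finsum_mem [PartialOrder M] [AddLeftMono M] {f g : α → M}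
    (hf : (s ∩ support f).Finite) (hg : (s ∩ support g).Finite) (h : ∀ a ∈ s, f a ≤ g a) :
    ∑ᶠ a ∈ s, f a ≤ ∑ᶠ a ∈ s, g a := by
  rw [finsum_mem_def, finsum_mem_def]
  refine finsum_le_finsum' (by rwa [HasFiniteSupport, Set.support_indicator])
    (by rwa [HasFiniteSupport, Set.support_indicator]) fun a => ?_
  by_cases ha : a ∈ s
  · simpa [Set.indicator_of_mem ha] using h a ha
  · simp [Set.indicator_of_notMem ha]

theorem Finset.sum_finsum_mem_comm (D : Finset ι) (f : ι → α → M)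
    (h : ∀ i ∈ D, (s ∩ support (f i)).Finite) :
    ∑ i ∈ D, ∑ᶠ a ∈ s, f i a = ∑ᶠ a ∈ s, ∑ i ∈ D, f i a := by
  simp_rw [finsum_mem_def]
  rw [sum_finsum_comm D _ fun i hi => by rw [HasFiniteSupport, Set.support_indicator]; exact h i hi]
  refine finsum_congr fun a => ?_
  by_cases ha : a ∈ s <;> simp [ha]

end FinsumMem

section AdjacentSwap

variable {γ : Type*} (r : γ → γ → Prop)

def AdjacentSwap (l l' : List γ) : Prop :=
  ∃ a x y b, l = a ++ x :: y :: b ∧ l' = a ++ y :: x :: b ∧ r y x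

variable {r}

theorem AdjacentSwap.perm {l l' : List γ} (h : AdjacentSwap r l l') : l.Perm l' := by
  obtain ⟨a, x, y, b, rfl, rfl, -⟩ := h
  exact (List.Perm.swap y x b).append_left a

theorem AdjacentSwap.append_left {l l' : List γ} (h : AdjacentSwap r l l') (c : List γ) :
    AdjacentSwap r (c ++ l) (c ++ l') := by
  obtain ⟨a, x, y, b, rfl, rfl, hyx⟩ := h
  exact ⟨c ++ a, x, y, b, by simp, by simp, hyx⟩

theorem reflTransGen_adjacentSwap_bubble {u : γ} (a b : List γ) (hmin : ∀ x ∈ a, r u x) :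
    ReflTransGen (AdjacentSwap r) (a ++ u :: b) (u :: (a ++ b)) := by
  induction a using List.reverseRecOn generalizing b with
  | nil => exact .refl
  | append_singleton a x ih =>
    have swap : AdjacentSwap r (a ++ [x] ++ u :: b) (a ++ u :: x :: b) :=
      ⟨a, x, u, b, by simp, rfl, hmin x (by simp)⟩
    simpa using (ih (x :: b) fun y hy => hmin y (by simp [hy])).head swap

theorem List.Perm.reflTransGen_adjacentSwap {l₁ l₂ : List γ} (hp : l₁.Perm l₂)
    (hn : l₂.Nodup) (hs : l₂.Pairwise r) : ReflTransGen (AdjacentSwap r) l₁ l₂ := by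
  induction l₂ generalizing l₁ with
  | nil => rw [List.perm_nil.mp hp]
  | cons u us ih =>
    obtain ⟨a, b, rfl⟩ := List.append_of_mem (hp.symm.subset List.mem_cons_self)
    have hua : u ∉ a := fun h =>
      (List.nodup_append.mp (hp.nodup_iff.mpr hn)).2.2 u h u List.mem_cons_self rfl
    have hmin : ∀ x ∈ a, r u x := fun x hx =>
      List.rel_of_pairwise_cons hs <| (List.mem_cons.mp (hp.subset (by simp [hx]))).resolve_left
        fun hxu => hua (hxu ▸ hx)
    have htail : (a ++ b).Perm us := (List.perm_cons u).mp (List.perm_middle.symm.trans hp)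
    refine (reflTransGen_adjacentSwap_bubble a b hmin).trans ?_
    exact (ih htail (List.nodup_cons.mp hn).2 (List.pairwise_cons.mp hs).2).lift (u :: ·)
      fun _ _ h => h.append_left [u]

end AdjacentSwap

theorem Net.FireSeq.append {S T : Type*} {N : Net S T} {M₁ M₂ M₃ : S → ℕ}
    {σ ρ : List T} (h₁ : N.FireSeq M₁ σ M₂) (h₂ : N.FireSeq M₂ ρ M₃) :
    N.FireSeq M₁ (σ ++ ρ) M₃ := by
  induction σ generalizing M₁ with
  | nil => exact (show M₂ = M₁ from h₁) ▸ h₂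
  | cons t σ ih =>
    obtain ⟨M, hstep, hrest⟩ := h₁
    exact ⟨M, hstep, ih hrest⟩

namespace RawProc

variable {S T α β : Type*} (P : RawProc S T α β)

def CausalLE (u t : β) : Prop := ReflTransGen P.flowRel (.inr u) (.inr t)

def Ready (C : Finset β) (t : β) : Prop :=
  ∀ w p, P.flowTP w p ≠ 0 → P.flowPT p t ≠ 0 → w ∈ C

def IsDownClosed (C : Finset β) : Prop := ∀ t ∈ C, P.Ready C t

/-- The subtraction does not truncate when `C` is down-closed, by
`IsProcessOf.sum_flowPT_le_initMark_add_sum_flowTP`. -/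
def markAfter (C : Finset β) (p : α) : ℕ :=
  P.initMark p + ∑ w ∈ C, P.flowTP w p - ∑ v ∈ C, P.flowPT p v

noncomputable def netMarking (C : Finset β) (s : S) : ℕ :=
  ∑ᶠ p ∈ {p | P.projS p = s}, P.markAfter C p

structure IsLinearisation (ts : List β) : Prop where
  nodup : ts.Nodup
  mem_iff : ∀ t, t ∈ ts ↔ t ∈ P.transitions
  pairwise : ts.Pairwise fun u t => ¬ P.CausalLE t u

variable {P}

theorem exists_isLinearisation_of_mem_Lin {σ : List T} (hσ : σ ∈ P.Lin) :
    ∃ ts, P.IsLinearisation ts ∧ σ = ts.map P.projT := by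
  obtain ⟨ts, hnd, hmem, hord, rfl⟩ := hσ
  refine ⟨ts, ⟨hnd, hmem, List.pairwise_iff_getElem.mpr fun i j hi hj hij hji => ?_⟩, rfl⟩
  exact absurd (hord j i hj hi hji) (by omega)

theorem Ready.mono {C C' : Finset β} {t : β} (h : P.Ready C t) (hCC' : C ⊆ C') :
    P.Ready C' t := fun w p hw hp => hCC' (h w p hw hp)

end RawProc

open RawProc

section Firing

variable {S T α β : Type*} {N : Net S T} {P : RawProc S T α β}

namespace IsProcessOf

variable (hP : IsProcessOf N P)
include hP

theorem finite_flowTP_ne_zero (w : β) : {p | P.flowTP w p ≠ 0}.Finite := by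
  by_cases hw : w ∈ P.transitions
  · exact hP.t_post_fin w hw
  · exact Set.finite_empty.subset fun p hp => hw (hP.flowTP_dom w p hp).2

theorem finite_flowPT_ne_zero (t : β) : {p | P.flowPT p t ≠ 0}.Finite := by
  by_cases ht : t ∈ P.transitions
  · exact hP.t_pre_fin t ht
  · exact Set.finite_empty.subset fun p hp => ht (hP.flowPT_dom p t hp).2

theorem eq_of_flowPT_ne_zero {p : α} {t u : β} (ht : P.flowPT p t ≠ 0)
    (hu : P.flowPT p u ≠ 0) : t = u :=
  (hP.post_place p (hP.flowPT_dom p t ht).1).1 ht hu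

theorem sum_flowPT_le_one (D : Finset β) (p : α) : ∑ v ∈ D, P.flowPT p v ≤ 1 := by
  by_cases h : ∃ t ∈ D, P.flowPT p t ≠ 0
  · obtain ⟨t, htD, ht⟩ := h
    rw [Finset.sum_eq_single_of_mem t htD fun v _ hvt =>
      by_contra fun hv => hvt (hP.eq_of_flowPT_ne_zero hv ht)]
    exact (hP.post_place p (hP.flowPT_dom p t ht).1).2 t
  · push Not at h
    simp [Finset.sum_eq_zero h]

theorem one_le_initMark_add_sum_flowTP {C : Finset β} {p : α} (hp : p ∈ P.places)
    (hC : ∀ w, P.flowTP w p ≠ 0 → w ∈ C) :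
    1 ≤ P.initMark p + ∑ w ∈ C, P.flowTP w p := by
  by_cases h : ∃ w, P.flowTP w p ≠ 0
  · obtain ⟨w, hw⟩ := h
    have := Finset.single_le_sum (f := fun w => P.flowTP w p) (fun _ _ => Nat.zero_le _)
      (hC w hw)
    omega
  · push Not at h
    rw [hP.init_one p hp h]
    omega

theorem sum_flowPT_le_initMark_add_sum_flowTP {C : Finset β} (hC : P.IsDownClosed C) (p : α) :
    ∑ v ∈ C, P.flowPT p v ≤ P.initMark p + ∑ w ∈ C, P.flowTP w p := by
  by_cases h : ∃ t ∈ C, P.flowPT p t ≠ 0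
  · obtain ⟨t, htC, ht⟩ := h
    have := hP.one_le_initMark_add_sum_flowTP (hP.flowPT_dom p t ht).1
      fun w hw => hC t htC w p hw ht
    have := hP.sum_flowPT_le_one C p
    omega
  · push Not at h
    simp [Finset.sum_eq_zero h]

/-- Transitions that are ready after `C` but not in `C` consume from disjoint places. -/
theorem sum_flowPT_le_markAfter {C D : Finset β} (hDC : Disjoint D C)
    (hD : ∀ t ∈ D, P.Ready C t) (p : α) : ∑ v ∈ D, P.flowPT p v ≤ P.markAfter C p := by
  by_cases h : ∃ t ∈ D, P.flowPT p t ≠ 0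
  · obtain ⟨t, htD, ht⟩ := h
    have hC : ∑ v ∈ C, P.flowPT p v = 0 := Finset.sum_eq_zero fun v hvC =>
      by_contra fun hv => Finset.disjoint_left.mp hDC htD (hP.eq_of_flowPT_ne_zero hv ht ▸ hvC)
    have := hP.one_le_initMark_add_sum_flowTP (hP.flowPT_dom p t ht).1
      fun w hw => hD t htD w p hw ht
    have := hP.sum_flowPT_le_one D p
    unfold markAfter
    omega
  · push Not at h
    simp [Finset.sum_eq_zero h]

theorem markAfter_insert {C : Finset β} (hC : P.IsDownClosed C) {t : β} (htC : t ∉ C)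
    (ht : P.Ready C t) (p : α) :
    P.markAfter (insert t C) p + P.flowPT p t = P.markAfter C p + P.flowTP t p := by
  have hcons := hP.sum_flowPT_le_initMark_add_sum_flowTP hC p
  have hfree := hP.sum_flowPT_le_markAfter (D := {t}) (by simpa using htC) (by simpa using ht) p
  simp only [Finset.sum_singleton] at hfree
  unfold markAfter at *
  rw [Finset.sum_insert htC, Finset.sum_insert htC]
  omega

theorem finite_markAfter_support (C : Finset β) (s : S) :
    ({p | P.projS p = s} ∩ support (P.markAfter C)).Finite := by
  refine ((hP.proj_init_fin s).union
    (C.finite_toSet.biUnion fun w _ => hP.finite_flowTP_ne_zero w)).subset ?_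
  rintro p ⟨hps, hp⟩
  by_cases h : ∃ w ∈ C, P.flowTP w p ≠ 0
  · obtain ⟨w, hwC, hw⟩ := h
    exact Or.inr (Set.mem_biUnion hwC hw)
  · push Not at h
    refine Or.inl ⟨hps, fun h0 => hp ?_⟩
    simp [markAfter, h0, Finset.sum_eq_zero h]

theorem netMarking_empty : P.netMarking ∅ = N.M0 := by
  funext s
  simpa [netMarking, markAfter] using hP.proj_init s

theorem sum_pre_le_netMarking {C D : Finset β} (hDT : ∀ t ∈ D, t ∈ P.transitions)
    (hDC : Disjoint D C) (hD : ∀ t ∈ D, P.Ready C t) (s : S) :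
    ∑ t ∈ D, N.pre (P.projT t) s ≤ P.netMarking C s := by
  rw [Finset.sum_congr rfl fun t ht => (hP.proj_pre t (hDT t ht) s).symm,
    Finset.sum_finsum_mem_comm D _ fun t _ =>
      (hP.finite_flowPT_ne_zero t).subset Set.inter_subset_right]
  refine finsum_mem_le_finsum_mem ?_ (hP.finite_markAfter_support C s)
    fun p _ => hP.sum_flowPT_le_markAfter hDC hD p
  refine ((D.finite_toSet.biUnion fun t _ => hP.finite_flowPT_ne_zero t)).subset ?_
  rintro p ⟨-, hp⟩
  obtain ⟨t, htD, ht⟩ := Finset.exists_ne_zero_of_sum_ne_zero hp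
  exact Set.mem_biUnion htD ht

theorem enabled_netMarking {C D : Finset β} (hD0 : D.Nonempty)
    (hDT : ∀ t ∈ D, t ∈ P.transitions) (hDC : Disjoint D C) (hD : ∀ t ∈ D, P.Ready C t) :
    N.Enabled (P.netMarking C) (D.val.map P.projT) := by
  refine ⟨by simpa using hD0.ne_empty, fun s => ?_⟩
  simpa [Net.preM, Multiset.map_map] using hP.sum_pre_le_netMarking hDT hDC hD s

theorem step_netMarking {C : Finset β} (hC : P.IsDownClosed C) {t : β}
    (htT : t ∈ P.transitions) (htC : t ∉ C) (ht : P.Ready C t) :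
    N.Step (P.netMarking C) {P.projT t} (P.netMarking (insert t C)) := by
  have hen := hP.enabled_netMarking (D := {t}) (by simp) (by simpa using htT)
    (by simpa using htC) (by simpa using ht)
  refine ⟨by simpa using hen, fun s => ?_⟩
  have hle := hen.2 s
  have hsum : P.netMarking (insert t C) s + N.pre (P.projT t) s =
      P.netMarking C s + N.post (P.projT t) s := by
    rw [← hP.proj_pre t htT, ← hP.proj_post t htT, netMarking, netMarking,
      ← finsum_mem_add_distrib' (hP.finite_markAfter_support _ s)
        ((hP.finite_flowPT_ne_zero t).subset Set.inter_subset_right),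
      ← finsum_mem_add_distrib' (hP.finite_markAfter_support _ s)
        ((hP.finite_flowTP_ne_zero t).subset Set.inter_subset_right)]
    exact finsum_mem_congr rfl fun p _ => hP.markAfter_insert hC htC ht p
  simp only [Net.preM, Net.postM, Finset.singleton_val, Multiset.map_singleton,
    Multiset.sum_singleton] at hle ⊢
  omega

end IsProcessOf

namespace RawProc.IsLinearisation

variable {ts : List β}

theorem ready (hP : IsProcessOf N P) (h : P.IsLinearisation ts) {a b : List β} {t : β}
    (hts : ts = a ++ t :: b) : P.Ready a.toFinset t := by
  intro w p hw ht
  have hwp : P.flowRel (.inr w) (.inl p) := hw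
  have hpt : P.flowRel (.inl p) (.inr t) := ht
  have hwt : P.CausalLE w t := ReflTransGen.head hwp (ReflTransGen.single hpt)
  have hwts : w ∈ ts := (h.mem_iff w).mpr (hP.flowTP_dom w p hw).2
  rw [hts, List.mem_append, List.mem_cons] at hwts
  rcases hwts with hwa | rfl | hwb
  · exact List.mem_toFinset.mpr hwa
  · exact absurd (TransGen.head hwp (TransGen.single hpt)) (hP.acyclic _)
  · have := h.pairwise
    rw [hts, List.pairwise_append, List.pairwise_cons] at this
    exact absurd hwt (this.2.1.1 w hwb)

theorem isDownClosed (hP : IsProcessOf N P) (h : P.IsLinearisation ts) {a b : List β}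
    (hts : ts = a ++ b) : P.IsDownClosed a.toFinset := by
  intro t ht
  obtain ⟨a₁, a₂, rfl⟩ := List.append_of_mem (List.mem_toFinset.mp ht)
  refine (h.ready hP (a := a₁) (b := a₂ ++ b) (by simp [hts])).mono fun x hx => ?_
  simp only [List.mem_toFinset, List.mem_append] at hx ⊢
  exact Or.inl hx

theorem fireSeq (hP : IsProcessOf N P) (h : P.IsLinearisation ts) {a b : List β}
    (hts : ts = a ++ b) : N.FireSeq N.M0 (a.map P.projT) (P.netMarking a.toFinset) := by
  induction a using List.reverseRecOn generalizing b with
  | nil => exact hP.netMarking_empty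
  | append_singleton a t ih =>
    have hts' : ts = a ++ t :: b := by simp [hts]
    have htC : t ∉ a := fun hta =>
      (List.nodup_append.mp (hts' ▸ h.nodup)).2.2 t hta t List.mem_cons_self rfl
    have hstep := hP.step_netMarking (h.isDownClosed hP hts')
      ((h.mem_iff t).mp (by simp [hts'])) (by simpa using htC) (h.ready hP hts')
    rw [List.map_append, List.toFinset_append, Finset.union_comm]
    exact (ih hts').append ⟨_, hstep, rfl⟩

theorem fs (hP : IsProcessOf N P) (h : P.IsLinearisation ts) : N.FS (ts.map P.projT) :=
  ⟨_, h.fireSeq hP (b := []) (by simp)⟩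

theorem adjacent (hP : IsProcessOf N P) {a b : List β} {t u : β}
    (h : P.IsLinearisation (a ++ t :: u :: b)) (h' : P.IsLinearisation (a ++ u :: t :: b)) :
    N.Adjacent ((a ++ t :: u :: b).map P.projT) ((a ++ u :: t :: b).map P.projT) := by
  have hnd := List.nodup_append.mp h.nodup
  have htu : t ≠ u := fun htu => (List.nodup_cons.mp hnd.2.1).1 (htu ▸ List.mem_cons_self)
  have hdisj : Disjoint ({t, u} : Finset β) a.toFinset := by
    simp only [Finset.disjoint_insert_left, Finset.disjoint_singleton_left, List.mem_toFinset]
    exact ⟨fun ha => hnd.2.2 t ha t (by simp) rfl, fun ha => hnd.2.2 u ha u (by simp) rfl⟩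
  have hen := hP.enabled_netMarking (D := {t, u}) (by simp)
    (by simp [← h.mem_iff]) hdisj (by simp [h.ready hP rfl, h'.ready hP rfl])
  rw [Finset.insert_val_of_notMem (by simpa using htu)] at hen
  refine ⟨h.fs hP, h'.fs hP, a.map P.projT, P.projT t, P.projT u, b.map P.projT, _,
    by simp, by simp, h.fireSeq hP rfl, by simpa using hen⟩

theorem of_adjacentSwap {ts' : List β} (h : P.IsLinearisation ts)
    (hs : AdjacentSwap (fun u t => ¬ P.CausalLE t u) ts ts') : P.IsLinearisation ts' := by
  refine ⟨hs.perm.nodup_iff.mp h.nodup, fun t => hs.perm.mem_iff.symm.trans (h.mem_iff t), ?_⟩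
  obtain ⟨a, x, y, b, rfl, rfl, hyx⟩ := hs
  have hpw := h.pairwise
  simp only [List.pairwise_append, List.pairwise_cons, List.mem_cons] at hpw ⊢
  grind

theorem adjEquiv (hP : IsProcessOf N P) {us : List β} (h : P.IsLinearisation ts)
    (h' : P.IsLinearisation us) : N.AdjEquiv (ts.map P.projT) (us.map P.projT) := by
  have hperm : ts.Perm us := (List.perm_ext_iff_of_nodup h.nodup h'.nodup).mpr
    fun t => (h.mem_iff t).trans (h'.mem_iff t).symm
  have hchain := hperm.reflTransGen_adjacentSwap h'.nodup h'.pairwise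
  suffices ∀ l, ReflTransGen (AdjacentSwap _) ts l →
      P.IsLinearisation l ∧ N.AdjEquiv (ts.map P.projT) (l.map P.projT) from (this us hchain).2
  intro l hl
  induction hl with
  | refl => exact ⟨h, .refl⟩
  | tail _ hs ih =>
    obtain ⟨hl, hadj⟩ := ih
    have hl' := hl.of_adjacentSwap hs
    obtain ⟨a, x, y, b, rfl, rfl, -⟩ := hs
    exact ⟨hl', hadj.tail (hl.adjacent hP hl')⟩

end RawProc.IsLinearisation

end Firing

theorem common_process_implies_adjEquiv_general {S T α β : Type*} (N : Net S T)
    (σ ρ : List T)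
    (P : RawProc S T α β) (hP : IsProcessOf N P)
    (hσP : σ ∈ RawProc.Lin P) (hρP : ρ ∈ RawProc.Lin P) :
    N.AdjEquiv σ ρ := by
  obtain ⟨ts, hts, rfl⟩ := exists_isLinearisation_of_mem_Lin hσP
  obtain ⟨us, hus, rfl⟩ := exists_isLinearisation_of_mem_Lin hρP
  exact hts.adjEquiv hP hus

/-- Best–Devillers: if two firing sequences `σ`, `ρ` of `N`
are linearisations of a common finite GR-process `P` (i.e. `Π(σ) ∩ Π(ρ) ≠ ∅`),
then `σ ↔* ρ`. -/
theorem common_process_implies_adjEquiv {S T α β : Type*} (N : Net S T)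
    (σ ρ : List T) (hσ : N.FS σ) (hρ : N.FS ρ)
    (P : RawProc S T α β) (hP : IsProcessOf N P) (hPfin : P.FiniteProc)
    (hσP : σ ∈ RawProc.Lin P) (hρP : ρ ∈ RawProc.Lin P) :
    N.AdjEquiv σ ρ :=
  common_process_implies_adjEquiv_general N σ ρ P hP hσP hρP
end

section
/- Let N be a net and σ, ρ firing sequences of N with σ ↔ ρ (σ and ρ adjacent). Then Π(σ) ∩ Π(ρ) ≠ ∅, i.e. there exists a finite GR-process P of N with σ ∈ Lin(P) and ρ ∈ Lin(P). -/
open scoped Classical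

/-!
Take the process of `σ = σ₁ t u σ₂` in which transitions consume the oldest tokens first: the
`j`-th token ever put on a place `s` becomes the condition `(s, j)`, the `i`-th transition of `σ`
the event `(σ[i], i)`, and event `i` consumes (produces) on `s` the tokens numbered from the
cumulative consumption (production) before it up to the one after it. Because `σ` is a firing
sequence, every token is produced before it is consumed; ranking events by position and
conditions by their producer makes the flow acyclic and `σ` a linearisation. Because `{t, u}` is
enabled as a step after `σ₁`, every token that `u` consumes existed before `t` fired, so no
condition links the events of `t` and `u`: they are causally independent, and `σ₁ u t σ₂` is a
linearisation as well.
-/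

theorem List.Pairwise.swap_adjacent {α : Type*} {R : α → α → Prop} {l₁ l₂ : List α} {a b : α}
    (h : (l₁ ++ a :: b :: l₂).Pairwise R) (hba : R b a) : (l₁ ++ b :: a :: l₂).Pairwise R := by
  simp only [List.pairwise_append, List.pairwise_cons, List.mem_cons] at h ⊢
  grind

theorem Relation.TransGen.map_lt {α β : Type*} [Preorder β] {r : α → α → Prop} {f : α → β}
    (hf : ∀ a b, r a b → f a < f b) {a b : α} (h : Relation.TransGen r a b) : f a < f b := by
  induction h with
  | single h => exact hf _ _ h
  | tail _ h ih => exact ih.trans (hf _ _ h)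

theorem Relation.ReflTransGen.map_le {α β : Type*} [Preorder β] {r : α → α → Prop} {f : α → β}
    (hf : ∀ a b, r a b → f a < f b) {a b : α} (h : Relation.ReflTransGen r a b) : f a ≤ f b := by
  induction h with
  | refl => exact le_rfl
  | tail _ h ih => exact ih.trans (hf _ _ h).le

theorem Nat.exists_le_lt_succ {f : ℕ → ℕ} {n j : ℕ} (h0 : f 0 ≤ j) (hn : j < f n) :
    ∃ i < n, f i ≤ j ∧ j < f (i + 1) := by
  induction n with
  | zero => omega
  | succ n ih =>
    by_cases hj : f n ≤ j
    · exact ⟨n, n.lt_succ_self, hj, hn⟩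
    · obtain ⟨i, hi, h⟩ := ih (not_le.1 hj)
      exact ⟨i, hi.trans n.lt_succ_self, h⟩

theorem Monotone.eq_of_le_of_lt_succ {f : ℕ → ℕ} (hf : Monotone f) {i i' j : ℕ}
    (h : f i ≤ j ∧ j < f (i + 1)) (h' : f i' ≤ j ∧ j < f (i' + 1)) : i = i' := by
  rcases lt_trichotomy i i' with hlt | heq | hlt
  · have := hf (show i + 1 ≤ i' by omega); omega
  · exact heq
  · have := hf (show i' + 1 ≤ i by omega); omega

theorem finsum_ite_Ico (lo hi : ℕ) : ∑ᶠ j : ℕ, (if lo ≤ j ∧ j < hi then 1 else 0) = hi - lo := by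
  rw [finsum_eq_sum_of_support_subset _ (s := Finset.Ico lo hi) (by intro j; simp),
    Finset.sum_ite_of_true fun j hj => Finset.mem_Ico.1 hj]
  simp

theorem finite_setOf_fst_mem_snd_lt {S : Type*} {A : Set S} (hA : A.Finite) (f : S → ℕ) :
    {p : S × ℕ | p.1 ∈ A ∧ p.2 < f p.1}.Finite := by
  refine (hA.biUnion fun s _ => (Set.finite_Iio (f s)).image (Prod.mk s)).subset ?_
  rintro ⟨s, j⟩ ⟨hs, hj⟩
  exact Set.mem_biUnion hs ⟨j, hj, rfl⟩

namespace RawProc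

variable {S T α β : Type*} (P : RawProc S T α β)

theorem map_projT_mem_Lin {ts : List β} (hnd : ts.Nodup) (hmem : ∀ x, x ∈ ts ↔ x ∈ P.transitions)
    (hord : ts.Pairwise fun x y => ¬ Relation.ReflTransGen P.flowRel (.inr y) (.inr x)) :
    ts.map P.projT ∈ P.Lin := by
  refine ⟨ts, hnd, hmem, fun i j hi hj hij => ?_, rfl⟩
  by_contra hji
  exact List.pairwise_iff_getElem.1 hord j i hj hi (by omega) hij

theorem exists_place_of_causal {x y : β} (h : P.causal (.inr x) (.inr y)) :
    ∃ p z, P.flowTP x p ≠ 0 ∧ P.flowPT p z ≠ 0 ∧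
      Relation.ReflTransGen P.flowRel (.inr z) (.inr y) := by
  obtain ⟨_ | _, hxp, hpy⟩ := Relation.TransGen.head'_iff.1 h
  · rcases Relation.ReflTransGen.cases_head hpy with h | ⟨_ | _, hpz, hzy⟩
    · cases h
    · exact absurd hpz id
    · exact ⟨_, _, hxp, hpz, hzy⟩
  · exact absurd hxp id

theorem setOf_causal_subset (hdom : ∀ t p, P.flowTP t p ≠ 0 → t ∈ P.transitions) (x : α ⊕ β) :
    {u | P.causal (.inr u) x} ⊆ P.transitions := by
  intro u hu
  obtain ⟨p | _, hup, -⟩ := Relation.TransGen.head'_iff.1 hu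
  · exact hdom u p hup
  · exact absurd hup id

end RawProc

namespace BigCarrier

variable {S T : Type*}

def token (p : S × ℕ) : BigCarrier S T := {(.inl p.1, p.2)}

def event (e : T × ℕ) : BigCarrier S T := {(.inr e.1, e.2)}

theorem token_injective : Function.Injective (token : S × ℕ → BigCarrier S T) := by
  rintro ⟨s, j⟩ ⟨s', j'⟩ h
  simpa [token] using h

theorem event_injective : Function.Injective (event : T × ℕ → BigCarrier S T) := by
  rintro ⟨a, i⟩ ⟨a', i'⟩ h
  simpa [event] using h

end BigCarrier

open BigCarrier

namespace Net

variable {S T : Type*} (N : Net S T)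

theorem step_singleton_iff {M M' : S → ℕ} {t : T} :
    N.Step M {t} M' ↔ (∀ s, N.pre t s ≤ M s) ∧ ∀ s, M' s = M s - N.pre t s + N.post t s := by
  simp [Step, Enabled, preM, postM]

theorem fireSeq_append {M M' : S → ℕ} {l₁ l₂ : List T} :
    N.FireSeq M (l₁ ++ l₂) M' ↔ ∃ M₁, N.FireSeq M l₁ M₁ ∧ N.FireSeq M₁ l₂ M' := by
  induction l₁ generalizing M with
  | nil => simp [FireSeq]
  | cons t l₁ ih => simp only [List.cons_append, FireSeq, ih]; grind

theorem FireSeq.add_sum_pre_eq {M M' : S → ℕ} {l : List T} (h : N.FireSeq M l M') (s : S) :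
    M' s + (l.map (N.pre · s)).sum = M s + (l.map (N.post · s)).sum := by
  induction l generalizing M with
  | nil => simp only [FireSeq] at h; simp [h]
  | cons t l ih =>
    obtain ⟨M₁, hstep, hl⟩ := h
    obtain ⟨hpre, hM₁⟩ := (N.step_singleton_iff).1 hstep
    have := ih hl
    have := hpre s
    have := hM₁ s
    simp only [List.map_cons, List.sum_cons]
    omega

theorem FireSeq.sum_pre_add_preM_le {M : S → ℕ} {l : List T} (h : N.FireSeq N.M0 l M)
    {G : Multiset T} (hG : ∀ s, N.preM G s ≤ M s) (s : S) :
    (l.map (N.pre · s)).sum + N.preM G s ≤ N.M0 s + (l.map (N.post · s)).sum := by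
  have := h.add_sum_pre_eq N s
  have := hG s
  omega

variable (L : List T)

def consumedBefore (i : ℕ) (s : S) : ℕ := ((L.map (N.pre · s)).take i).sum

def producedBefore (i : ℕ) (s : S) : ℕ := N.M0 s + ((L.map (N.post · s)).take i).sum

theorem consumedBefore_succ {i : ℕ} (hi : i < L.length) (s : S) :
    N.consumedBefore L (i + 1) s = N.consumedBefore L i s + N.pre L[i] s := by
  rw [consumedBefore, consumedBefore, List.sum_take_succ _ i (by simpa using hi), List.getElem_map]

theorem producedBefore_succ {i : ℕ} (hi : i < L.length) (s : S) :
    N.producedBefore L (i + 1) s = N.producedBefore L i s + N.post L[i] s := by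
  rw [producedBefore, producedBefore, List.sum_take_succ _ i (by simpa using hi), List.getElem_map,
    add_assoc]

theorem producedBefore_zero (s : S) : N.producedBefore L 0 s = N.M0 s := by
  simp [producedBefore]

theorem consumedBefore_mono (s : S) : Monotone (N.consumedBefore L · s) :=
  fun _ _ h => (List.take_sublist_take_left h).sum_le_sum fun _ _ => Nat.zero_le _

theorem producedBefore_mono (s : S) : Monotone (N.producedBefore L · s) :=
  fun _ _ h => Nat.add_le_add_left
    ((List.take_sublist_take_left h).sum_le_sum fun _ _ => Nat.zero_le _) _

theorem M0_le_producedBefore (i : ℕ) (s : S) : N.M0 s ≤ N.producedBefore L i s :=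
  (N.producedBefore_zero L s).symm.le.trans (N.producedBefore_mono L s (Nat.zero_le i))

def TokensAvailable : Prop :=
  ∀ i < L.length, ∀ s, N.consumedBefore L (i + 1) s ≤ N.producedBefore L i s

variable {N L}

theorem FS.tokensAvailable (h : N.FS L) : N.TokensAvailable L := by
  intro i hi s
  obtain ⟨M', hM'⟩ := h
  rw [← List.take_append_drop i L, fireSeq_append, List.drop_eq_getElem_cons hi] at hM'
  obtain ⟨M, hM, M₁, hstep, -⟩ := hM'
  have hG : ∀ s, N.preM {L[i]} s ≤ M s := by simpa [preM] using hstep.1.2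
  rw [consumedBefore_succ _ _ hi]
  simpa [consumedBefore, producedBefore, preM, List.map_take]
    using hM.sum_pre_add_preM_le N hG s

theorem FireSeq.consumedBefore_length_add_two_le {σ₁ σ₂ : List T} {t u : T} {M : S → ℕ}
    (hM : N.FireSeq N.M0 σ₁ M) (htu : N.Enabled M (t ::ₘ {u})) (s : S) :
    N.consumedBefore (σ₁ ++ t :: u :: σ₂) (σ₁.length + 2) s ≤
      N.producedBefore (σ₁ ++ t :: u :: σ₂) σ₁.length s := by
  have := hM.sum_pre_add_preM_le N htu.2 s
  simp only [preM, Multiset.map_cons, Multiset.map_singleton, Multiset.sum_cons,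
    Multiset.sum_singleton, consumedBefore, producedBefore, List.map_append, List.map_cons,
    List.take_append, List.length_map, List.take_of_length_le, le_add_iff_nonneg_right, zero_le,
    add_tsub_cancel_left, Nat.sub_self, List.take_succ_cons, List.take_zero, le_refl,
    List.sum_append,
    List.sum_cons, List.sum_nil, add_zero] at this ⊢
  omega

variable (N L)

/-- `(s, j)` stands for the `j`-th token ever put on `s` (initial tokens first) and `(a, i)` for
the `i`-th transition `a` of `L`; transitions consume the oldest tokens of their preplaces. -/
def Consumes (p : S × ℕ) (e : T × ℕ) : Prop :=
  e ∈ L.zipIdx ∧ N.consumedBefore L e.2 p.1 ≤ p.2 ∧ p.2 < N.consumedBefore L (e.2 + 1) p.1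

def Produces (e : T × ℕ) (p : S × ℕ) : Prop :=
  e ∈ L.zipIdx ∧ N.producedBefore L e.2 p.1 ≤ p.2 ∧ p.2 < N.producedBefore L (e.2 + 1) p.1

/-- One more than the position of the transition producing the token; `0` for initial tokens. -/
noncomputable def birth (p : S × ℕ) : ℕ := sInf {i | p.2 < N.producedBefore L i p.1}

/-- The defaults of the projections are junk values taken off the codes of tokens and events. -/
noncomputable def fifoProcess [Nonempty S] [Nonempty T] :
    RawProc S T (BigCarrier S T) (BigCarrier S T) where
  places := token '' {p | p.2 < N.producedBefore L L.length p.1}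
  transitions := event '' {e | e ∈ L.zipIdx}
  flowPT x y := if Relation.Map (N.Consumes L) token event x y then 1 else 0
  flowTP y x := if Relation.Map (N.Produces L) event token y x then 1 else 0
  initMark := (token '' {p | p.2 < N.M0 p.1}).indicator 1
  projS := Function.extend token Prod.fst fun _ => Classical.arbitrary S
  projT := Function.extend event Prod.fst fun _ => Classical.arbitrary T

/-- Event `i` sits at `2 i + 1` and a token produced by event `i` at `2 i + 2`, so the rank
increases along the flow of `fifoProcess`. -/
noncomputable def rank : BigCarrier S T ⊕ BigCarrier S T → ℕ :=
  Sum.elim (Function.extend token (fun p => 2 * N.birth L p) 0)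
    (Function.extend event (fun e => 2 * e.2 + 1) 0)

variable {N L}

@[simp] theorem rank_token (p : S × ℕ) : N.rank L (.inl (token p)) = 2 * N.birth L p := by
  simp [rank, token_injective.extend_apply]

@[simp] theorem rank_event (e : T × ℕ) : N.rank L (.inr (event e)) = 2 * e.2 + 1 := by
  simp [rank, event_injective.extend_apply]

theorem consumes_iff {e : T × ℕ} (he : e ∈ L.zipIdx) (s : S) (j : ℕ) :
    N.Consumes L (s, j) e ↔
      N.consumedBefore L e.2 s ≤ j ∧ j < N.consumedBefore L e.2 s + N.pre e.1 s := by
  obtain ⟨hi, h₁⟩ := List.mem_zipIdx' he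
  simp [Consumes, he, N.consumedBefore_succ L hi, h₁]

theorem produces_iff {e : T × ℕ} (he : e ∈ L.zipIdx) (s : S) (j : ℕ) :
    N.Produces L e (s, j) ↔
      N.producedBefore L e.2 s ≤ j ∧ j < N.producedBefore L e.2 s + N.post e.1 s := by
  obtain ⟨hi, h₁⟩ := List.mem_zipIdx' he
  simp [Produces, he, N.producedBefore_succ L hi, h₁]

theorem Produces.birth_eq {e : T × ℕ} {p : S × ℕ} (h : N.Produces L e p) :
    N.birth L p = e.2 + 1 :=
  le_antisymm (Nat.sInf_le h.2.2) <| le_csInf ⟨_, h.2.2⟩ fun m hm => by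
    by_contra! hlt
    have := N.producedBefore_mono L p.1 (Nat.le_of_lt_succ hlt)
    exact absurd hm (not_lt.2 (this.trans h.2.1))

theorem Consumes.birth_le (hL : N.TokensAvailable L) {p : S × ℕ} {e : T × ℕ}
    (h : N.Consumes L p e) : N.birth L p ≤ e.2 :=
  Nat.sInf_le <| h.2.2.trans_le <| hL _ (List.mem_zipIdx' h.1).1 _

theorem Produces.eq_of_produces {e e' : T × ℕ} {p : S × ℕ} (h : N.Produces L e p)
    (h' : N.Produces L e' p) : e = e' := by
  have hi := (N.producedBefore_mono L p.1).eq_of_le_of_lt_succ h.2 h'.2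
  obtain ⟨-, h₁⟩ := List.mem_zipIdx' h.1
  obtain ⟨-, h₂⟩ := List.mem_zipIdx' h'.1
  exact Prod.ext (by simp [h₁, h₂, hi]) hi

theorem Consumes.eq_of_consumes {p : S × ℕ} {e e' : T × ℕ} (h : N.Consumes L p e)
    (h' : N.Consumes L p e') : e = e' := by
  have hi := (N.consumedBefore_mono L p.1).eq_of_le_of_lt_succ h.2 h'.2
  obtain ⟨-, h₁⟩ := List.mem_zipIdx' h.1
  obtain ⟨-, h₂⟩ := List.mem_zipIdx' h'.1
  exact Prod.ext (by simp [h₁, h₂, hi]) hi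

theorem Consumes.lt_producedBefore_length (hL : N.TokensAvailable L) {p : S × ℕ} {e : T × ℕ}
    (h : N.Consumes L p e) : p.2 < N.producedBefore L L.length p.1 := by
  have hi := (List.mem_zipIdx' h.1).1
  exact h.2.2.trans_le <| (hL _ hi _).trans (N.producedBefore_mono L _ hi.le)

theorem Produces.lt_producedBefore_length {e : T × ℕ} {p : S × ℕ} (h : N.Produces L e p) :
    p.2 < N.producedBefore L L.length p.1 :=
  h.2.2.trans_le (N.producedBefore_mono L _ (List.mem_zipIdx' h.1).1)

theorem Produces.M0_le {e : T × ℕ} {p : S × ℕ} (h : N.Produces L e p) : N.M0 p.1 ≤ p.2 :=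
  (N.M0_le_producedBefore L _ _).trans h.2.1

namespace fifoProcess

theorem nodup_events {L : List T} : (L.zipIdx.map (event (S := S))).Nodup :=
  ((List.nodup_zipIdx_map_snd L).of_map Prod.snd).map event_injective

variable [Nonempty S] [Nonempty T]

theorem flowPT_ne_zero_iff {x y : BigCarrier S T} :
    (N.fifoProcess L).flowPT x y ≠ 0 ↔ ∃ p e, N.Consumes L p e ∧ token p = x ∧ event e = y := by
  simp [fifoProcess, Relation.Map]

theorem flowTP_ne_zero_iff {y x : BigCarrier S T} :
    (N.fifoProcess L).flowTP y x ≠ 0 ↔ ∃ e p, N.Produces L e p ∧ event e = y ∧ token p = x := by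
  simp [fifoProcess, Relation.Map]

theorem initMark_ne_zero_iff {x : BigCarrier S T} :
    (N.fifoProcess L).initMark x ≠ 0 ↔ ∃ p, p.2 < N.M0 p.1 ∧ token p = x := by
  simp [fifoProcess, Set.indicator]

theorem flowPT_token_event (p : S × ℕ) (e : T × ℕ) :
    (N.fifoProcess L).flowPT (token p) (event e) = if N.Consumes L p e then 1 else 0 := by
  simp [fifoProcess, Relation.map_apply_apply token_injective event_injective]

theorem flowTP_event_token (e : T × ℕ) (p : S × ℕ) :
    (N.fifoProcess L).flowTP (event e) (token p) = if N.Produces L e p then 1 else 0 := by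
  simp [fifoProcess, Relation.map_apply_apply event_injective token_injective]

theorem initMark_token (p : S × ℕ) :
    (N.fifoProcess L).initMark (token p) = if p.2 < N.M0 p.1 then 1 else 0 := by
  simp [fifoProcess, Set.indicator, token_injective.mem_set_image]

@[simp] theorem projS_token (p : S × ℕ) : (N.fifoProcess L).projS (token p) = p.1 := by
  simp [fifoProcess, token_injective.extend_apply]

@[simp] theorem projT_event (e : T × ℕ) : (N.fifoProcess L).projT (event e) = e.1 := by
  simp [fifoProcess, event_injective.extend_apply]

theorem flowPT_le_one (x y : BigCarrier S T) : (N.fifoProcess L).flowPT x y ≤ 1 := by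
  simp only [fifoProcess]; split <;> simp

theorem flowTP_le_one (y x : BigCarrier S T) : (N.fifoProcess L).flowTP y x ≤ 1 := by
  simp only [fifoProcess]; split <;> simp

theorem mem_transitions_of_flowTP_ne_zero {y x : BigCarrier S T}
    (h : (N.fifoProcess L).flowTP y x ≠ 0) : y ∈ (N.fifoProcess L).transitions := by
  obtain ⟨e, p, he, rfl, rfl⟩ := flowTP_ne_zero_iff.1 h
  exact ⟨e, he.1, rfl⟩

theorem finite : (N.fifoProcess L).FiniteProc :=
  (List.finite_toSet L.zipIdx).image _

theorem mem_events_iff (x : BigCarrier S T) :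
    x ∈ L.zipIdx.map event ↔ x ∈ (N.fifoProcess L).transitions := by
  simp [fifoProcess]

theorem map_projT_events : (L.zipIdx.map event).map (N.fifoProcess L).projT = L := by
  simp [Function.comp_def, List.zipIdx_map_fst]

theorem subsingleton_setOf_flowTP_ne_zero (x : BigCarrier S T) :
    {y | (N.fifoProcess L).flowTP y x ≠ 0}.Subsingleton := by
  intro y hy y' hy'
  obtain ⟨e, p, hep, rfl, rfl⟩ := flowTP_ne_zero_iff.1 hy
  obtain ⟨e', p', hep', rfl, hpp'⟩ := flowTP_ne_zero_iff.1 hy'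
  rw [token_injective hpp'] at hep'
  rw [hep.eq_of_produces hep']

theorem subsingleton_setOf_flowPT_ne_zero (x : BigCarrier S T) :
    {y | (N.fifoProcess L).flowPT x y ≠ 0}.Subsingleton := by
  intro y hy y' hy'
  obtain ⟨p, e, hpe, rfl, rfl⟩ := flowPT_ne_zero_iff.1 hy
  obtain ⟨p', e', hpe', hpp', rfl⟩ := flowPT_ne_zero_iff.1 hy'
  rw [token_injective hpp'] at hpe'
  rw [hpe.eq_of_consumes hpe']

theorem initMark_eq_zero_of_flowTP_ne_zero {y x : BigCarrier S T}
    (h : (N.fifoProcess L).flowTP y x ≠ 0) : (N.fifoProcess L).initMark x = 0 := by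
  obtain ⟨e, p, hep, rfl, rfl⟩ := flowTP_ne_zero_iff.1 h
  simpa [initMark_token] using hep.M0_le

theorem initMark_eq_one {x : BigCarrier S T} (hx : x ∈ (N.fifoProcess L).places)
    (hnone : ∀ y, (N.fifoProcess L).flowTP y x = 0) : (N.fifoProcess L).initMark x = 1 := by
  obtain ⟨⟨s, j⟩, hj, rfl⟩ := hx
  rw [initMark_token, if_pos]
  by_contra! hM0
  obtain ⟨i, hi, hij⟩ := Nat.exists_le_lt_succ (f := (N.producedBefore L · s))
    ((N.producedBefore_zero L s).trans_le hM0) hj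
  have hp : N.Produces L (L[i], i) (s, j) := ⟨List.mem_zipIdx_iff_getElem?.2 (by simp), hij⟩
  simpa [flowTP_event_token, hp] using hnone (event (L[i], i))

theorem finite_setOf_flowPT_ne_zero {e : T × ℕ} (he : e ∈ L.zipIdx) :
    {x | (N.fifoProcess L).flowPT x (event e) ≠ 0}.Finite := by
  refine ((finite_setOf_fst_mem_snd_lt (N.pre_fin e.1)
    (N.consumedBefore L (e.2 + 1))).image token).subset ?_
  intro x hx
  obtain ⟨⟨s, j⟩, e', hpe, rfl, he'⟩ := flowPT_ne_zero_iff.1 hx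
  rw [event_injective he'] at hpe
  have := (consumes_iff he s j).1 hpe
  exact ⟨(s, j), ⟨show N.pre e.1 s ≠ 0 by omega, hpe.2.2⟩, rfl⟩

theorem exists_flowPT_ne_zero {e : T × ℕ} (he : e ∈ L.zipIdx) :
    ∃ x, (N.fifoProcess L).flowPT x (event e) ≠ 0 := by
  obtain ⟨s, hs⟩ := N.pre_ne e.1
  refine ⟨token (s, N.consumedBefore L e.2 s), ?_⟩
  rw [flowPT_token_event, if_pos ((consumes_iff he _ _).2 (by omega))]
  exact one_ne_zero

theorem finite_setOf_flowTP_ne_zero {e : T × ℕ} (he : e ∈ L.zipIdx) :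
    {x | (N.fifoProcess L).flowTP (event e) x ≠ 0}.Finite := by
  refine ((finite_setOf_fst_mem_snd_lt (N.post_fin e.1)
    (N.producedBefore L (e.2 + 1))).image token).subset ?_
  intro x hx
  obtain ⟨e', ⟨s, j⟩, hep, he', rfl⟩ := flowTP_ne_zero_iff.1 hx
  rw [event_injective he'] at hep
  have := (produces_iff he s j).1 hep
  exact ⟨(s, j), ⟨show N.post e.1 s ≠ 0 by omega, hep.2.2⟩, rfl⟩

theorem finite_setOf_initMark_ne_zero (s : S) :
    {x | (N.fifoProcess L).projS x = s ∧ (N.fifoProcess L).initMark x ≠ 0}.Finite := by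
  refine ((finite_setOf_fst_mem_snd_lt (Set.finite_singleton s) N.M0).image token).subset ?_
  rintro x ⟨hxs, hx⟩
  obtain ⟨p, hp, rfl⟩ := initMark_ne_zero_iff.1 hx
  exact ⟨p, ⟨by simpa using hxs, hp⟩, rfl⟩

theorem finsum_projS_eq {g : BigCarrier S T → ℕ} (hg : Function.support g ⊆ Set.range token)
    (s : S) : ∑ᶠ x ∈ {x | (N.fifoProcess L).projS x = s}, g x = ∑ᶠ j, g (token (s, j)) := by
  rw [finsum_mem_inter_support_eq g _ (Set.range fun j => token (s, j)),
    finsum_mem_range fun j j' h => by simpa using token_injective h]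
  ext x
  constructor
  · rintro ⟨hx, hgx⟩
    obtain ⟨p, rfl⟩ := hg hgx
    exact ⟨⟨p.2, by simp [← show p.1 = s by simpa using hx]⟩, hgx⟩
  · rintro ⟨⟨j, rfl⟩, hgx⟩
    exact ⟨by simp, hgx⟩

theorem finsum_initMark (s : S) :
    ∑ᶠ x ∈ {x | (N.fifoProcess L).projS x = s}, (N.fifoProcess L).initMark x = N.M0 s := by
  rw [finsum_projS_eq fun x hx => by obtain ⟨p, -, rfl⟩ := initMark_ne_zero_iff.1 hx; simp]
  simpa [initMark_token] using finsum_ite_Ico 0 (N.M0 s)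

theorem finsum_flowPT {e : T × ℕ} (he : e ∈ L.zipIdx) (s : S) :
    ∑ᶠ x ∈ {x | (N.fifoProcess L).projS x = s}, (N.fifoProcess L).flowPT x (event e) =
      N.pre e.1 s := by
  rw [finsum_projS_eq fun x hx => by obtain ⟨p, -, -, rfl, -⟩ := flowPT_ne_zero_iff.1 hx; simp]
  simpa [flowPT_token_event, consumes_iff he] using
    finsum_ite_Ico (N.consumedBefore L e.2 s) (N.consumedBefore L e.2 s + N.pre e.1 s)

theorem finsum_flowTP {e : T × ℕ} (he : e ∈ L.zipIdx) (s : S) :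
    ∑ᶠ x ∈ {x | (N.fifoProcess L).projS x = s}, (N.fifoProcess L).flowTP (event e) x =
      N.post e.1 s := by
  rw [finsum_projS_eq fun x hx => by obtain ⟨-, p, -, -, rfl⟩ := flowTP_ne_zero_iff.1 hx; simp]
  simpa [flowTP_event_token, produces_iff he] using
    finsum_ite_Ico (N.producedBefore L e.2 s) (N.producedBefore L e.2 s + N.post e.1 s)

variable (hL : N.TokensAvailable L)
include hL

theorem rank_lt_of_flowRel {x y : BigCarrier S T ⊕ BigCarrier S T}
    (h : (N.fifoProcess L).flowRel x y) : N.rank L x < N.rank L y := by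
  rcases x with x | x <;> rcases y with y | y
  · exact absurd h id
  · obtain ⟨p, e, hpe, rfl, rfl⟩ := flowPT_ne_zero_iff.1 h
    have := hpe.birth_le hL
    rw [rank_token, rank_event]
    omega
  · obtain ⟨e, p, hep, rfl, rfl⟩ := flowTP_ne_zero_iff.1 h
    rw [rank_token, rank_event, hep.birth_eq]
    omega
  · exact absurd h id

theorem index_le_of_reflTransGen {e e' : T × ℕ}
    (h : Relation.ReflTransGen (N.fifoProcess L).flowRel (.inr (event e)) (.inr (event e'))) :
    e.2 ≤ e'.2 := by
  have := h.map_le fun _ _ h => rank_lt_of_flowRel hL h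
  rw [rank_event, rank_event] at this
  omega

theorem isProcessOf : IsProcessOf N (N.fifoProcess L) where
  flowPT_dom x y h := by
    obtain ⟨p, e, hpe, rfl, rfl⟩ := flowPT_ne_zero_iff.1 h
    exact ⟨⟨p, hpe.lt_producedBefore_length hL, rfl⟩, ⟨e, hpe.1, rfl⟩⟩
  flowTP_dom y x h := by
    obtain ⟨e, p, hep, rfl, rfl⟩ := flowTP_ne_zero_iff.1 h
    exact ⟨⟨p, hep.lt_producedBefore_length, rfl⟩, ⟨e, hep.1, rfl⟩⟩
  initMark_dom x hx := by
    by_contra h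
    obtain ⟨p, hp, rfl⟩ := initMark_ne_zero_iff.1 h
    exact hx ⟨p, hp.trans_le (N.M0_le_producedBefore L _ _), rfl⟩
  pre_place x _ := ⟨subsingleton_setOf_flowTP_ne_zero x, fun y => flowTP_le_one y x⟩
  post_place x _ := ⟨subsingleton_setOf_flowPT_ne_zero x, fun y => flowPT_le_one x y⟩
  init_one _ hx hnone := initMark_eq_one hx hnone
  init_zero _ _ := fun ⟨_, hy⟩ => initMark_eq_zero_of_flowTP_ne_zero hy
  acyclic x hx := lt_irrefl _ (hx.map_lt fun _ _ h => rank_lt_of_flowRel hL h)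
  finite_past x _ := finite.subset <| RawProc.setOf_causal_subset _
    (fun _ _ => mem_transitions_of_flowTP_ne_zero) _
  t_pre_fin := by
    rintro _ ⟨e, he, rfl⟩
    exact finite_setOf_flowPT_ne_zero he
  t_pre_ne := by
    rintro _ ⟨e, he, rfl⟩
    exact exists_flowPT_ne_zero he
  t_post_fin := by
    rintro _ ⟨e, he, rfl⟩
    exact finite_setOf_flowTP_ne_zero he
  proj_init_fin := finite_setOf_initMark_ne_zero
  proj_init := finsum_initMark
  proj_pre := by
    rintro _ ⟨e, he, rfl⟩ s
    rw [projT_event, finsum_flowPT he]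
  proj_post := by
    rintro _ ⟨e, he, rfl⟩ s
    rw [projT_event, finsum_flowTP he]

theorem pairwise_events : (L.zipIdx.map event).Pairwise
    fun x y => ¬ Relation.ReflTransGen (N.fifoProcess L).flowRel (.inr y) (.inr x) := by
  have : L.zipIdx.Pairwise fun e e' => e.2 < e'.2 :=
    List.pairwise_iff_getElem.2 fun i j hi hj hij => by simpa using hij
  exact this.map _ fun e e' h h' => (index_le_of_reflTransGen hL h').not_gt h

theorem self_mem_Lin : L ∈ (N.fifoProcess L).Lin := by
  simpa only [map_projT_events] using
    RawProc.map_projT_mem_Lin _ nodup_events mem_events_iff (pairwise_events hL)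

theorem not_reflTransGen_event_succ {k : ℕ}
    (hk : ∀ s, N.consumedBefore L (k + 2) s ≤ N.producedBefore L k s) (a b : T) :
    ¬ Relation.ReflTransGen (N.fifoProcess L).flowRel (.inr (event (a, k)))
      (.inr (event (b, k + 1))) := by
  intro h
  rcases Relation.reflTransGen_iff_eq_or_transGen.1 h with h | h
  · simp [event_injective.eq_iff] at h
  obtain ⟨x, z, hx, hz, hzy⟩ := RawProc.exists_place_of_causal _ h
  obtain ⟨e, p, hp, he, rfl⟩ := flowTP_ne_zero_iff.1 hx
  obtain ⟨p', e', hp', hpp', rfl⟩ := flowPT_ne_zero_iff.1 hz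
  rw [event_injective he] at hp
  rw [token_injective hpp'] at hp'
  have h₁ : k + 1 ≤ e'.2 := hp.birth_eq ▸ hp'.birth_le hL
  have h₂ : e'.2 ≤ k + 1 := index_le_of_reflTransGen hL hzy
  have hconsumed : p.2 < N.consumedBefore L (k + 2) p.1 := by
    simpa [show e'.2 = k + 1 by omega] using hp'.2.2
  have hproduced : N.producedBefore L k p.1 ≤ p.2 := hp.2.1
  exact absurd (hk p.1) (by omega)

theorem swap_mem_Lin {σ₁ σ₂ : List T} {t u : T} (hσ : L = σ₁ ++ t :: u :: σ₂)
    (htu : ∀ s, N.consumedBefore L (σ₁.length + 2) s ≤ N.producedBefore L σ₁.length s) :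
    σ₁ ++ u :: t :: σ₂ ∈ (N.fifoProcess L).Lin := by
  set A := σ₁.zipIdx.map (event (S := S))
  set B := (σ₂.zipIdx (σ₁.length + 2)).map (event (S := S))
  have hevents :
      L.zipIdx.map event = A ++ event (t, σ₁.length) :: event (u, σ₁.length + 1) :: B := by
    simp [hσ, A, B, List.zipIdx_append, List.zipIdx_cons]
  have hperm := (List.Perm.swap (event (t, σ₁.length)) (event (u, σ₁.length + 1)) B).append_left A
  have hlin := RawProc.map_projT_mem_Lin (N.fifoProcess L)
    (hperm.nodup_iff.2 (hevents ▸ nodup_events))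
    (fun x => hperm.mem_iff.trans (hevents ▸ mem_events_iff x))
    ((hevents ▸ pairwise_events hL).swap_adjacent (not_reflTransGen_event_succ hL htu t u))
  simpa [A, B, Function.comp_def, List.zipIdx_map_fst] using hlin

end fifoProcess

end Net

/-- Best–Devillers: adjacent firing sequences of `N` are
linearisations of a common finite GR-process: `σ ↔ ρ` implies
`Π(σ) ∩ Π(ρ) ≠ ∅`. -/
theorem adjacent_implies_common_process {S T : Type*} (N : Net S T)
    (σ ρ : List T) (h : N.Adjacent σ ρ) :
    ∃ P : RawProc S T (BigCarrier S T) (BigCarrier S T),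
      IsProcessOf N P ∧ P.FiniteProc ∧
      σ ∈ RawProc.Lin P ∧ ρ ∈ RawProc.Lin P := by
  obtain ⟨hσ, -, σ₁, t, u, σ₂, M, rfl, rfl, hM, htu⟩ := h
  have : Nonempty T := ⟨t⟩
  have := (N.pre_ne t).nonempty
  have hL := hσ.tokensAvailable
  exact ⟨N.fifoProcess _, Net.fifoProcess.isProcessOf hL, Net.fifoProcess.finite,
    Net.fifoProcess.self_mem_Lin hL,
    Net.fifoProcess.swap_mem_Lin hL rfl (hM.consumedBefore_length_add_two_le htu)⟩
end

section
/- Let N be a net and P, Q finite GR-processes of N with P ≈s Q (P and Q one step swapping equivalent). Then Lin(P) ∩ Lin(Q) ≠ ∅. -/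
open scoped Classical

/-!
Write `P' = swap(P, p, q)`. An edge of `P'` is either an edge of `P` or leads from `p` (resp. `q`)
to a successor of `q` (resp. `p`) in `P`. A cycle of `F_P ∪ F_P'` would therefore yield a cycle of
`P` or a causal path between `p` and `q`, so the union is acyclic, and a topological sort of the
transitions with respect to it linearises both `P` and `P'`. Its image under the isomorphism
`P' ≅ Q` is a linearisation of `Q` with the same labels.
-/

theorem Finset.exists_nodup_list_pairwise_not_rel {β : Type*} (r : β → β → Prop)
    [IsStrictOrder β r] (s : Finset β) :
    ∃ l : List β, l.Nodup ∧ (∀ x, x ∈ l ↔ x ∈ s) ∧ l.Pairwise fun x y => ¬ r y x := by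
  let := partialOrderOfSO r
  obtain ⟨le, hlin, hle⟩ := extend_partialOrder (α := β) (· ≤ ·)
  refine ⟨s.sort le, s.sort_nodup le, fun x => s.mem_sort le, ?_⟩
  refine ((s.pairwise_sort le).and (s.sort_nodup le)).imp fun ⟨hxy, hne⟩ hyx => hne ?_
  exact antisymm hxy (hle _ _ (Or.inr hyx))

namespace Relation

variable {γ δ : Type*}

theorem TransGen.of_map {r : γ → γ → Prop} {s : δ → δ → Prop} {f : γ → δ} {D : Set γ}
    (hrel : ∀ x ∈ D, ∀ y ∈ D, s (f x) (f y) → r x y)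
    (hlift : ∀ x ∈ D, ∀ w, s (f x) w → ∃ y ∈ D, f y = w)
    {x y : γ} (hx : x ∈ D) (hy : y ∈ D) (h : TransGen s (f x) (f y)) : TransGen r x y := by
  generalize hw : f x = w at h
  induction h using TransGen.head_induction_on generalizing x with
  | single h => subst hw; exact .single (hrel x hx y hy h)
  | head h _ ih =>
    subst hw
    obtain ⟨x', hx', rfl⟩ := hlift x hx _ h
    exact .head (hrel x hx x' hx' h) (ih hx' rfl)

variable {r : γ → γ → Prop} {a b : γ}

/-- `r ⊔ r'`, where `r'` is `r` with the outgoing edges of `a` and `b` exchanged. -/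
def supSwapOut (r : γ → γ → Prop) (a b : γ) (x y : γ) : Prop :=
  r x y ∨ (x = a ∧ r b y) ∨ (x = b ∧ r a y)

theorem TransGen.supSwapOut_cases (hr : ∀ x, ¬ TransGen r x x) (hab : ¬ TransGen r a b)
    (hba : ¬ TransGen r b a) {x y : γ} (hxy : TransGen (supSwapOut r a b) x y) :
    TransGen r x y ∨
      ((ReflTransGen r x a ∨ ReflTransGen r x b) ∧ (TransGen r a y ∨ TransGen r b y)) := by
  induction hxy with
  | single h =>
    rcases h with h | ⟨rfl, h⟩ | ⟨rfl, h⟩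
    · exact .inl (.single h)
    · exact .inr ⟨.inl .refl, .inr (.single h)⟩
    · exact .inr ⟨.inr .refl, .inl (.single h)⟩
  | tail _ h ih =>
    rcases h with h | ⟨rfl, h⟩ | ⟨rfl, h⟩
    · exact ih.imp (·.tail h) (.imp_right (.imp (·.tail h) (·.tail h)))
    · rcases ih with ih | ⟨-, ih | ih⟩
      · exact .inr ⟨.inl ih.to_reflTransGen, .inr (.single h)⟩
      · exact absurd ih (hr _)
      · exact absurd ih hba
    · rcases ih with ih | ⟨-, ih | ih⟩
      · exact .inr ⟨.inr ih.to_reflTransGen, .inl (.single h)⟩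
      · exact absurd ih hab
      · exact absurd ih (hr _)

theorem not_transGen_supSwapOut_self (hr : ∀ x, ¬ TransGen r x x) (hab : ¬ TransGen r a b)
    (hba : ¬ TransGen r b a) (x : γ) : ¬ TransGen (supSwapOut r a b) x x := by
  intro hx
  rcases hx.supSwapOut_cases hr hab hba with h | ⟨hxa | hxb, hax | hbx⟩
  · exact hr x h
  · exact hr a (hax.trans_left hxa)
  · exact hba (hbx.trans_left hxa)
  · exact hab (hax.trans_left hxb)
  · exact hr b (hbx.trans_left hxb)

end Relation

namespace RawProc

open Relation

variable {S T α β : Type*}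

theorem flowRel_sup_flowRel_swap_le (P : RawProc S T α β) (p q : α) :
    P.flowRel ⊔ (P.swap p q).flowRel ≤ supSwapOut P.flowRel (.inl p) (.inl q) := by
  rintro x y (h | h)
  · exact .inl h
  rcases x with a | t <;> rcases y with b | u
  · exact h.elim
  · change (if a = p then _ else if a = q then _ else _) ≠ 0 at h
    split_ifs at h with hp hq
    · exact .inr (.inl ⟨congrArg _ hp, h⟩)
    · exact .inr (.inr ⟨congrArg _ hq, h⟩)
    · exact .inl h
  · exact .inl h
  · exact h.elim

theorem map_projT_mem_lin {P : RawProc S T α β} {ts : List β} (hnd : ts.Nodup)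
    (hmem : ∀ t, t ∈ ts ↔ t ∈ P.transitions)
    (hord : ts.Pairwise fun t u => ¬ P.causal (.inr u) (.inr t)) :
    ts.map P.projT ∈ P.Lin := by
  refine ⟨ts, hnd, hmem, fun i j hi hj hij => ?_, rfl⟩
  by_contra! hji
  rcases reflTransGen_iff_eq_or_transGen.mp hij with he | ht
  · exact hji.ne ((hnd.getElem_inj_iff).mp (Sum.inr.inj he))
  · exact List.pairwise_iff_getElem.mp hord j i hj hi hji ht

theorem lin_inter_nonempty_of_acyclic_sup {P P' : RawProc S T α β} (hfin : P.FiniteProc)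
    (htr : P'.transitions = P.transitions) (hproj : P'.projT = P.projT)
    (hacyc : ∀ x, ¬ TransGen (P.flowRel ⊔ P'.flowRel) x x) :
    (P.Lin ∩ P'.Lin).Nonempty := by
  let r t u := TransGen (P.flowRel ⊔ P'.flowRel) (.inr t) (.inr u)
  have : IsStrictOrder β r := { irrefl _ := hacyc _, trans _ _ _ := TransGen.trans }
  obtain ⟨ts, hnd, hmem, hord⟩ := hfin.toFinset.exists_nodup_list_pairwise_not_rel r
  replace hmem t : t ∈ ts ↔ t ∈ P.transitions := (hmem t).trans hfin.mem_toFinset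
  refine ⟨ts.map P.projT, map_projT_mem_lin hnd hmem (hord.imp (mt ?_)), ?_⟩
  · exact TransGen.mono le_sup_left _ _
  · rw [← hproj]
    exact map_projT_mem_lin hnd (htr ▸ hmem) (hord.imp (mt (TransGen.mono le_sup_right _ _)))

theorem Iso.lin_subset {P Q : RawProc S T α β} (hiso : Iso P Q)
    (hQPT : ∀ p t, Q.flowPT p t ≠ 0 → p ∈ Q.places ∧ t ∈ Q.transitions)
    (hQTP : ∀ t p, Q.flowTP t p ≠ 0 → p ∈ Q.places ∧ t ∈ Q.transitions) :
    P.Lin ⊆ Q.Lin := by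
  obtain ⟨fS, fT, hfS, hfT, hflow, -, -, hprojT⟩ := hiso
  let D : Set (α ⊕ β) := {x | Sum.elim (· ∈ P.places) (· ∈ P.transitions) x}
  have hrel : ∀ x ∈ D, ∀ y ∈ D, Q.flowRel (Sum.map fS fT x) (Sum.map fS fT y) →
      P.flowRel x y := by
    rintro (a | a) hx (b | b) hy hxy
    · exact hxy.elim
    · exact fun h0 => hxy ((hflow a hx b hy).1.trans h0)
    · exact fun h0 => hxy ((hflow b hy a hx).2.trans h0)
    · exact hxy.elim
  have hlift : ∀ x ∈ D, ∀ w, Q.flowRel (Sum.map fS fT x) w →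
      ∃ y ∈ D, Sum.map fS fT y = w := by
    rintro (a | a) hx (w | w) hw
    · exact hw.elim
    · obtain ⟨b, hb, rfl⟩ := hfT.surjOn (hQPT _ _ hw).2
      exact ⟨.inr b, hb, rfl⟩
    · obtain ⟨b, hb, rfl⟩ := hfS.surjOn (hQTP _ _ hw).1
      exact ⟨.inl b, hb, rfl⟩
    · exact hw.elim
  rintro _ ⟨ts, hnd, hmem, hord, rfl⟩
  have hts : ∀ t ∈ ts, t ∈ P.transitions := fun t => (hmem t).mp
  refine ⟨ts.map fT, hnd.map_on fun t ht u hu => (hfT.injOn (hts t ht) (hts u hu)), ?_, ?_, ?_⟩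
  · simp only [List.mem_map, hmem, ← hfT.image_eq, Set.mem_image, implies_true]
  · simp only [List.length_map, List.get_eq_getElem, List.getElem_map] at hord ⊢
    intro i j hi hj hij
    refine hord i j hi hj ?_
    have hti := hts _ (List.getElem_mem hi)
    have htj := hts _ (List.getElem_mem hj)
    rcases reflTransGen_iff_eq_or_transGen.mp hij with he | ht
    · rw [hfT.injOn htj hti (Sum.inr.inj he)]
    · exact (TransGen.of_map (x := .inr ts[i]) (y := .inr ts[j]) hrel hlift hti htj
        ht).to_reflTransGen
  · rw [List.map_map]
    exact List.map_congr_left fun t ht => (hprojT t (hts t ht)).symm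

end RawProc

theorem swapStep_implies_common_linearisation_general {S T α β : Type*} (N : Net S T)
    (P Q : RawProc S T α β) (hP : IsProcessOf N P) (hQ : IsProcessOf N Q)
    (hPfin : P.FiniteProc)
    (h : RawProc.SwapStep P Q) :
    (RawProc.Lin P ∩ RawProc.Lin Q).Nonempty := by
  obtain ⟨p, q, -, -, -, hpq, hqp, hiso⟩ := h
  have hacyc (x) : ¬ Relation.TransGen (P.flowRel ⊔ (P.swap p q).flowRel) x x := fun hx =>
    Relation.not_transGen_supSwapOut_self hP.acyclic hpq hqp x
      (Relation.TransGen.mono (P.flowRel_sup_flowRel_swap_le p q) _ _ hx)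
  obtain ⟨σ, hσP, hσP'⟩ :=
    RawProc.lin_inter_nonempty_of_acyclic_sup (P' := P.swap p q) hPfin rfl rfl hacyc
  exact ⟨σ, hσP, hiso.lin_subset hQ.flowPT_dom hQ.flowTP_dom hσP'⟩

/-- Best–Devillers: one step swapping equivalent finite
GR-processes of `N` have a common linearisation: `P ≈s Q` implies
`Lin(P) ∩ Lin(Q) ≠ ∅`. -/
theorem swapStep_implies_common_linearisation {S T α β : Type*} (N : Net S T)
    (P Q : RawProc S T α β) (hP : IsProcessOf N P) (hQ : IsProcessOf N Q)
    (hPfin : P.FiniteProc) (hQfin : Q.FiniteProc)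
    (h : RawProc.SwapStep P Q) :
    (RawProc.Lin P ∩ RawProc.Lin Q).Nonempty :=
  swapStep_implies_common_linearisation_general N P Q hP hQ hPfin h
end
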